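/- arXiv:1010.1279 — 9 statements merged into one kernel-verified Lean document; each statement's English description precedes it below -/
import Mathlib

section
/- Let q = 2^h, Tr the absolute trace of GF(q). Let α,β,λ and α',β',λ' ∈ GF(q) with λ ≠ λ', λ,λ' ≠ 0, Tr(αβ) = Tr(α'β') = 1. Define α⊕α' = (αλ + α'λ')/(λ+λ'), β⊕β' = (βλ + β'λ')/(λ+λ'), λ⊕λ' = λ+λ'. If Tr((α⊕α')(β⊕β')) = 1, then the conics {αx²+xy+βy²+λz²=0} and {α'x²+xy+β'y²+λ'z²=0} in PG(2,q) are disjoint. -/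
/-!
A common point `(x, y, z)` of the two conics also lies on the combination `λ' F + λ F'`, in which
the `z²` terms cancel in characteristic two; after dividing by `λ + λ'` it reads
`(α ⊕' α') x² + x y + (β ⊕' β') y² = 0`, where `⊕'` is the composition with `λ` and `λ'` swapped.
A binary form `a t² + t s + b s²` with a nontrivial zero has `a b = u² + u` for some `u`, hence
`Tr(a b) = 0`. But `(α ⊕ α')(β ⊕ β') = (α ⊕' α')(β ⊕' β') + α β + α' β'`, so the traces would give
`1 = 0 + 1 + 1`.
-/

open Algebra

theorem Algebra.trace_pow_card {K L : Type*} [Field K] [Fintype K] [Field L] [Algebra K L]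
    [Algebra.IsAlgebraic K L] (x : L) :
    trace K L (x ^ Fintype.card K) = trace K L x :=
  trace_eq_of_algEquiv (FiniteField.frobeniusAlgEquivOfAlgebraic K L) x

theorem Algebra.trace_sq_add_self_eq_zero {L : Type*} [Field L] [Algebra (ZMod 2) L]
    [Algebra.IsAlgebraic (ZMod 2) L] (u : L) :
    trace (ZMod 2) L (u ^ 2 + u) = 0 := by
  have hfrob := trace_pow_card (K := ZMod 2) u
  rw [ZMod.card] at hfrob
  rw [map_add, hfrob, CharTwo.add_self_eq_zero]

/-- The composition `a ⊕ a'` of the paper for the weights `l, l'`. -/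
def weightedAvg {L : Type*} [Field L] (l l' a a' : L) : L := (a * l + a' * l') / (l + l')

section CharTwo

variable {L : Type*} [Field L] [CharP L 2]

theorem exists_sq_add_self_eq_mul_of_isotropic {a b t s : L}
    (heq : a * t ^ 2 + t * s + b * s ^ 2 = 0) (hts : (t, s) ≠ (0, 0)) :
    ∃ u, u ^ 2 + u = a * b := by
  rcases eq_or_ne s 0 with rfl | hs
  · have ht : t ≠ 0 := by rintro rfl; exact hts rfl
    have ha : a = 0 := by simpa [ht] using heq
    exact ⟨0, by simp [ha]⟩
  · -- `(a t / s)² + a t / s = a (a t² + t s) / s² = a b s² / s²`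
    refine ⟨a * t / s, ?_⟩
    field_simp
    linear_combination a * heq - a * b * s ^ 2 * CharTwo.two_eq_zero (R := L)

theorem weightedAvg_mul_weightedAvg {l l' : L} (hl : l + l' ≠ 0) (a a' b b' : L) :
    weightedAvg l l' a a' * weightedAvg l l' b b' =
      weightedAvg l' l a a' * weightedAvg l' l b b' + (a * b + a' * b') := by
  unfold weightedAvg
  rw [add_comm l' l]
  field_simp
  linear_combination (-(a * b * l' * (l + l')) - a' * b' * l * (l + l')) * CharTwo.two_eq_zero (R := L)

theorem weightedAvg_swap_form_eq_zero {α β lam α' β' lam' x y z : L} (hl : lam + lam' ≠ 0)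
    (e : α * x ^ 2 + x * y + β * y ^ 2 + lam * z ^ 2 = 0)
    (e' : α' * x ^ 2 + x * y + β' * y ^ 2 + lam' * z ^ 2 = 0) :
    weightedAvg lam' lam α α' * x ^ 2 + x * y + weightedAvg lam' lam β β' * y ^ 2 = 0 := by
  unfold weightedAvg
  rw [add_comm lam' lam]
  field_simp
  linear_combination lam' * e + lam * e' - lam * lam' * z ^ 2 * CharTwo.two_eq_zero (R := L)

end CharTwo

theorem conics_disjoint_of_trace_composition_general (h : ℕ)
    (α β lam α' β' lam' : GaloisField 2 h)
    (hlam : lam ≠ 0) (hne : lam ≠ lam')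
    (h1 : Algebra.trace (ZMod 2) (GaloisField 2 h) (α * β) = 1)
    (h2 : Algebra.trace (ZMod 2) (GaloisField 2 h) (α' * β') = 1)
    (h3 : Algebra.trace (ZMod 2) (GaloisField 2 h)
      (((α * lam + α' * lam') / (lam + lam')) *
        ((β * lam + β' * lam') / (lam + lam'))) = 1) :
    ∀ x y z : GaloisField 2 h, (x, y, z) ≠ (0, 0, 0) →
      ¬ (α * x ^ 2 + x * y + β * y ^ 2 + lam * z ^ 2 = 0 ∧
         α' * x ^ 2 + x * y + β' * y ^ 2 + lam' * z ^ 2 = 0) := by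
  rintro x y z hxyz ⟨e, e'⟩
  have hl : lam + lam' ≠ 0 := mt CharTwo.add_eq_zero.mp hne
  have hxy : (x, y) ≠ (0, 0) := by
    rintro ⟨⟨⟩, ⟨⟩⟩
    have hz : z = 0 := by simpa [hlam] using e
    exact hxyz (by rw [hz])
  obtain ⟨u, hu⟩ := exists_sq_add_self_eq_mul_of_isotropic
    (weightedAvg_swap_form_eq_zero hl e e') hxy
  change trace (ZMod 2) _ (weightedAvg lam lam' α α' * weightedAvg lam lam' β β') = 1 at h3
  rw [weightedAvg_mul_weightedAvg hl, ← hu, map_add, trace_sq_add_self_eq_zero, map_add, h1, h2]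
    at h3
  exact absurd h3 (by decide)

/-- Mathon's disjointness lemma: if `Tr((α⊕α')(β⊕β')) = 1` then the conics
`F_{α,β,λ}` and `F_{α',β',λ'}` are disjoint in `PG(2, 2^h)`, i.e. no nonzero
vector `(x,y,z)` satisfies both equations. -/
theorem conics_disjoint_of_trace_composition (h : ℕ) (hh : 1 ≤ h)
    (α β lam α' β' lam' : GaloisField 2 h)
    (hlam : lam ≠ 0) (hlam' : lam' ≠ 0) (hne : lam ≠ lam')
    (h1 : Algebra.trace (ZMod 2) (GaloisField 2 h) (α * β) = 1)
    (h2 : Algebra.trace (ZMod 2) (GaloisField 2 h) (α' * β') = 1)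
    (h3 : Algebra.trace (ZMod 2) (GaloisField 2 h)
      (((α * lam + α' * lam') / (lam + lam')) *
        ((β * lam + β' * lam') / (lam + lam'))) = 1) :
    ∀ x y z : GaloisField 2 h, (x, y, z) ≠ (0, 0, 0) →
      ¬ (α * x ^ 2 + x * y + β * y ^ 2 + lam * z ^ 2 = 0 ∧
         α' * x ^ 2 + x * y + β' * y ^ 2 + lam' * z ^ 2 = 0) :=
  conics_disjoint_of_trace_composition_general h α β lam α' β' lam' hlam hne h1 h2 h3
end

section
/- In GF(2^7), for any x with x ≠ 0 and x satisfying 1 + x = x^7, the set {0, 1, x, x³, x⁷, x¹⁵, x³¹, x⁶³} is closed under addition (hence is an additive subgroup of GF(2^7) of order 8). -/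
/-- If `x ≠ 0` satisfies `1 + x = x^7` in `GF(2^7)`, then
`{0, 1, x, x³, x⁷, x¹⁵, x³¹, x⁶³}` is closed under addition. -/
theorem closed_under_addition_of_one_add_x_eq_x_pow_seven
    (x : GaloisField 2 7) (hx0 : x ≠ 0) (hx : 1 + x = x ^ 7) :
    ∀ a ∈ ({0, 1, x, x ^ 3, x ^ 7, x ^ 15, x ^ 31, x ^ 63} :
        Set (GaloisField 2 7)),
      ∀ b ∈ ({0, 1, x, x ^ 3, x ^ 7, x ^ 15, x ^ 31, x ^ 63} :
        Set (GaloisField 2 7)),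
      a + b ∈ ({0, 1, x, x ^ 3, x ^ 7, x ^ 15, x ^ 31, x ^ 63} :
        Set (GaloisField 2 7)) := by
  have h2 : (2 : GaloisField 2 7) = 0 := by
    exact_mod_cast CharP.cast_eq_zero (GaloisField 2 7) 2
  have h7 : x ^ 7 = 1 + x := hx.symm
  have h15 : x ^ 15 = x + x ^ 3 := by
    linear_combination (-(x^7+1+x)*x) * hx + x^2 * h2
  have h31 : x ^ 31 = 1 + x + x ^ 3 := by
    linear_combination ((x^15+x+x^3)*x) * h15 - hx + x^5 * h2
  have h63 : x ^ 63 = 1 + x ^ 3 := by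
    linear_combination ((x^31+1+x+x^3)*x) * h31 - hx + (x+x^2+x^4+x^5) * h2
  intro a ha b hb
  simp only [Set.mem_insert_iff, Set.mem_singleton_iff, h7, h15, h31, h63] at ha hb ⊢
  have hs : ∀ y : GaloisField 2 7, y + y = 0 := fun y => by linear_combination y * h2
  have hs2 : ∀ y z : GaloisField 2 7, y + (y + z) = z := fun y z => by
    linear_combination y * h2
  rcases ha with rfl|rfl|rfl|rfl|rfl|rfl|rfl|rfl <;>
    rcases hb with rfl|rfl|rfl|rfl|rfl|rfl|rfl|rfl <;>
    simp [hs, hs2, add_assoc, add_comm, add_left_comm]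
end

section
/- Let x ∈ GF(2^7) with the elements 0,1,x,x³,x⁷,x¹⁵,x³¹,x⁶³ pairwise distinct and satisfying 1 + x = x¹⁵. Then {0,1,x,x³,x⁷,x¹⁵,x³¹,x⁶³} is not closed under addition. (Hint from the paper: x⁷ + x¹⁵ = x⁷(1+x)⁸ = x¹²⁷ = 1, forcing x = x⁷, a contradiction.) -/
/-- If the eight elements `0,1,x,x³,x⁷,x¹⁵,x³¹,x⁶³` of `GF(2^7)` are pairwise
distinct and `1 + x = x¹⁵`, then the set they form is not closed under addition. -/
theorem not_closed_of_one_add_x_eq_x_pow_fifteen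
    (x : GaloisField 2 7)
    (hdist : ([0, 1, x, x ^ 3, x ^ 7, x ^ 15, x ^ 31, x ^ 63] :
      List (GaloisField 2 7)).Nodup)
    (hx : 1 + x = x ^ 15) :
    ¬ (∀ a ∈ ({0, 1, x, x ^ 3, x ^ 7, x ^ 15, x ^ 31, x ^ 63} :
          Set (GaloisField 2 7)),
        ∀ b ∈ ({0, 1, x, x ^ 3, x ^ 7, x ^ 15, x ^ 31, x ^ 63} :
          Set (GaloisField 2 7)),
        a + b ∈ ({0, 1, x, x ^ 3, x ^ 7, x ^ 15, x ^ 31, x ^ 63} :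
          Set (GaloisField 2 7))) := by
  intro _
  simp only [List.nodup_cons, List.mem_cons, List.mem_singleton, List.nodup_nil] at hdist
  -- x ≠ 0 and x^7 ≠ x from distinctness
  have hx0 : x ≠ 0 := fun h => hdist.1 (by simp [h])
  have hx7 : x ^ 7 ≠ x := by
    intro h
    exact hdist.2.2.1 (Or.inr (Or.inl h.symm))
  haveI : Fact (Nat.Prime 2) := ⟨by norm_num⟩
  haveI : Fintype (GaloisField 2 7) := Fintype.ofFinite _
  -- x ^ 128 = x
  have hcard : Fintype.card (GaloisField 2 7) = 2 ^ 7 := by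
    rw [← Nat.card_eq_fintype_card]; exact GaloisField.card 2 7 (by norm_num)
  have h128 : x ^ (128 : ℕ) = x := by
    have := FiniteField.pow_card x
    rwa [hcard] at this
  have h127 : x ^ (127 : ℕ) = 1 := by
    have : x ^ (127 : ℕ) * x = 1 * x := by
      rw [one_mul, ← pow_succ]; exact h128
    exact mul_right_cancel₀ hx0 this
  -- Frobenius: (1 + x)^8 = 1 + x^8
  have hfrob : (1 + x) ^ (8 : ℕ) = 1 + x ^ (8 : ℕ) := by
    have : (1 + x) ^ (2 ^ 3 : ℕ) = 1 ^ (2 ^ 3 : ℕ) + x ^ (2 ^ 3 : ℕ) :=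
      add_pow_char_pow (R := GaloisField 2 7) (p := 2) 1 x 3
    simpa using this
  -- x^7 + x^15 = 1
  have key : x ^ 7 + x ^ 15 = 1 := by
    calc x ^ 7 + x ^ 15 = x ^ 7 * (1 + x ^ 8) := by ring
    _ = x ^ 7 * (1 + x) ^ 8 := by rw [hfrob]
    _ = x ^ 7 * (x ^ 15) ^ 8 := by rw [hx]
    _ = x ^ 127 := by ring
    _ = 1 := h127
  -- conclude x^7 = x, contradiction
  apply hx7
  rw [← hx] at key
  have h2 : x + x = 0 := by
    have : (2 : GaloisField 2 7) = 0 := by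
      haveI : CharP (GaloisField 2 7) 2 := inferInstance
      exact_mod_cast CharP.cast_eq_zero (GaloisField 2 7) 2
    calc x + x = 2 * x := by ring
    _ = 0 := by rw [this, zero_mul]
  have h3 : x ^ 7 + x = 0 := by linear_combination key
  linear_combination h3 - h2
end

section
/- A set {0, 1, x, x³, x⁷, x¹⁵, x³¹, x⁶³} of eight distinct elements of GF(2^7) is an additive subgroup of GF(2^7) if and only if either 1 + x = x⁷ or 1 + x³ = x⁷. -/
lemma sqx_aux {K : Type*} [CommRing K] (h2 : (2:K) = 0) (y : K) {a b c : K}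
    (h : a + b = c) : y * a ^ 2 + y * b ^ 2 = y * c ^ 2 := by
  linear_combination y * (a + b + c) * h - a * b * y * h2

lemma closed_lines {K : Type*} [CommRing K] (h2 : (2:K) = 0)
    (a0 a1 a2 a3 a4 a5 a6 : K)
    (r0 : a0 + a1 = a3) (r1 : a1 + a2 = a4) (r2 : a2 + a3 = a5)
    (r3 : a3 + a4 = a6) (r4 : a4 + a5 = a0) (r5 : a5 + a6 = a1)
    (r6 : a6 + a0 = a2) :
    ∀ u ∈ ({0, a0, a1, a2, a3, a4, a5, a6} : Set K),
      ∀ v ∈ ({0, a0, a1, a2, a3, a4, a5, a6} : Set K),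
        u + v ∈ ({0, a0, a1, a2, a3, a4, a5, a6} : Set K) := by
  have s00 : a0 + a0 = 0 := by linear_combination a0 * h2
  have s01 : a0 + a1 = a3 := by linear_combination r0
  have s02 : a0 + a2 = a6 := by linear_combination r6 + (a2 + (-a6)) * h2
  have s03 : a0 + a3 = a1 := by linear_combination r0 + ((-a1) + a3) * h2
  have s04 : a0 + a4 = a5 := by linear_combination r4 + (a0 + (-a5)) * h2
  have s05 : a0 + a5 = a4 := by linear_combination r4 + (a0 + (-a4)) * h2
  have s06 : a0 + a6 = a2 := by linear_combination r6
  have s10 : a1 + a0 = a3 := by linear_combination r0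
  have s11 : a1 + a1 = 0 := by linear_combination a1 * h2
  have s12 : a1 + a2 = a4 := by linear_combination r1
  have s13 : a1 + a3 = a0 := by linear_combination r0 + ((-a0) + a3) * h2
  have s14 : a1 + a4 = a2 := by linear_combination r1 + ((-a2) + a4) * h2
  have s15 : a1 + a5 = a6 := by linear_combination r5 + (a1 + (-a6)) * h2
  have s16 : a1 + a6 = a5 := by linear_combination r5 + (a1 + (-a5)) * h2
  have s20 : a2 + a0 = a6 := by linear_combination r6 + (a2 + (-a6)) * h2
  have s21 : a2 + a1 = a4 := by linear_combination r1
  have s22 : a2 + a2 = 0 := by linear_combination a2 * h2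
  have s23 : a2 + a3 = a5 := by linear_combination r2
  have s24 : a2 + a4 = a1 := by linear_combination r1 + ((-a1) + a4) * h2
  have s25 : a2 + a5 = a3 := by linear_combination r2 + ((-a3) + a5) * h2
  have s26 : a2 + a6 = a0 := by linear_combination r6 + ((-a0) + a2) * h2
  have s30 : a3 + a0 = a1 := by linear_combination r0 + ((-a1) + a3) * h2
  have s31 : a3 + a1 = a0 := by linear_combination r0 + ((-a0) + a3) * h2
  have s32 : a3 + a2 = a5 := by linear_combination r2
  have s33 : a3 + a3 = 0 := by linear_combination a3 * h2
  have s34 : a3 + a4 = a6 := by linear_combination r3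
  have s35 : a3 + a5 = a2 := by linear_combination r2 + ((-a2) + a5) * h2
  have s36 : a3 + a6 = a4 := by linear_combination r3 + ((-a4) + a6) * h2
  have s40 : a4 + a0 = a5 := by linear_combination r4 + (a0 + (-a5)) * h2
  have s41 : a4 + a1 = a2 := by linear_combination r1 + ((-a2) + a4) * h2
  have s42 : a4 + a2 = a1 := by linear_combination r1 + ((-a1) + a4) * h2
  have s43 : a4 + a3 = a6 := by linear_combination r3
  have s44 : a4 + a4 = 0 := by linear_combination a4 * h2
  have s45 : a4 + a5 = a0 := by linear_combination r4
  have s46 : a4 + a6 = a3 := by linear_combination r3 + ((-a3) + a6) * h2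
  have s50 : a5 + a0 = a4 := by linear_combination r4 + (a0 + (-a4)) * h2
  have s51 : a5 + a1 = a6 := by linear_combination r5 + (a1 + (-a6)) * h2
  have s52 : a5 + a2 = a3 := by linear_combination r2 + ((-a3) + a5) * h2
  have s53 : a5 + a3 = a2 := by linear_combination r2 + ((-a2) + a5) * h2
  have s54 : a5 + a4 = a0 := by linear_combination r4
  have s55 : a5 + a5 = 0 := by linear_combination a5 * h2
  have s56 : a5 + a6 = a1 := by linear_combination r5
  have s60 : a6 + a0 = a2 := by linear_combination r6
  have s61 : a6 + a1 = a5 := by linear_combination r5 + (a1 + (-a5)) * h2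
  have s62 : a6 + a2 = a0 := by linear_combination r6 + ((-a0) + a2) * h2
  have s63 : a6 + a3 = a4 := by linear_combination r3 + ((-a4) + a6) * h2
  have s64 : a6 + a4 = a3 := by linear_combination r3 + ((-a3) + a6) * h2
  have s65 : a6 + a5 = a1 := by linear_combination r5
  have s66 : a6 + a6 = 0 := by linear_combination a6 * h2

  have z00 : (0:K) + 0 = (0:K) := by ring
  have za0 : (0:K) + a0 = a0 := by ring
  have zb0 : a0 + 0 = a0 := by ring
  have za1 : (0:K) + a1 = a1 := by ring
  have zb1 : a1 + 0 = a1 := by ring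
  have za2 : (0:K) + a2 = a2 := by ring
  have zb2 : a2 + 0 = a2 := by ring
  have za3 : (0:K) + a3 = a3 := by ring
  have zb3 : a3 + 0 = a3 := by ring
  have za4 : (0:K) + a4 = a4 := by ring
  have zb4 : a4 + 0 = a4 := by ring
  have za5 : (0:K) + a5 = a5 := by ring
  have zb5 : a5 + 0 = a5 := by ring
  have za6 : (0:K) + a6 = a6 := by ring
  have zb6 : a6 + 0 = a6 := by ring
  intro u hu v hv
  simp only [Set.mem_insert_iff, Set.mem_singleton_iff] at hu hv ⊢
  rcases hu with rfl|rfl|rfl|rfl|rfl|rfl|rfl|rfl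
  · rcases hv with rfl|rfl|rfl|rfl|rfl|rfl|rfl|rfl
    · exact Or.inl z00
    · exact Or.inr (Or.inl za0)
    · exact Or.inr (Or.inr (Or.inl za1))
    · exact Or.inr (Or.inr (Or.inr (Or.inl za2)))
    · exact Or.inr (Or.inr (Or.inr (Or.inr (Or.inl za3))))
    · exact Or.inr (Or.inr (Or.inr (Or.inr (Or.inr (Or.inl za4)))))
    · exact Or.inr (Or.inr (Or.inr (Or.inr (Or.inr (Or.inr (Or.inl za5))))))
    · exact Or.inr (Or.inr (Or.inr (Or.inr (Or.inr (Or.inr (Or.inr (za6)))))))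
  · rcases hv with rfl|rfl|rfl|rfl|rfl|rfl|rfl|rfl
    · exact Or.inr (Or.inl zb0)
    · exact Or.inl s00
    · exact Or.inr (Or.inr (Or.inr (Or.inr (Or.inl s01))))
    · exact Or.inr (Or.inr (Or.inr (Or.inr (Or.inr (Or.inr (Or.inr (s02)))))))
    · exact Or.inr (Or.inr (Or.inl s03))
    · exact Or.inr (Or.inr (Or.inr (Or.inr (Or.inr (Or.inr (Or.inl s04))))))
    · exact Or.inr (Or.inr (Or.inr (Or.inr (Or.inr (Or.inl s05)))))
    · exact Or.inr (Or.inr (Or.inr (Or.inl s06)))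
  · rcases hv with rfl|rfl|rfl|rfl|rfl|rfl|rfl|rfl
    · exact Or.inr (Or.inr (Or.inl zb1))
    · exact Or.inr (Or.inr (Or.inr (Or.inr (Or.inl s10))))
    · exact Or.inl s11
    · exact Or.inr (Or.inr (Or.inr (Or.inr (Or.inr (Or.inl s12)))))
    · exact Or.inr (Or.inl s13)
    · exact Or.inr (Or.inr (Or.inr (Or.inl s14)))
    · exact Or.inr (Or.inr (Or.inr (Or.inr (Or.inr (Or.inr (Or.inr (s15)))))))
    · exact Or.inr (Or.inr (Or.inr (Or.inr (Or.inr (Or.inr (Or.inl s16))))))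
  · rcases hv with rfl|rfl|rfl|rfl|rfl|rfl|rfl|rfl
    · exact Or.inr (Or.inr (Or.inr (Or.inl zb2)))
    · exact Or.inr (Or.inr (Or.inr (Or.inr (Or.inr (Or.inr (Or.inr (s20)))))))
    · exact Or.inr (Or.inr (Or.inr (Or.inr (Or.inr (Or.inl s21)))))
    · exact Or.inl s22
    · exact Or.inr (Or.inr (Or.inr (Or.inr (Or.inr (Or.inr (Or.inl s23))))))
    · exact Or.inr (Or.inr (Or.inl s24))
    · exact Or.inr (Or.inr (Or.inr (Or.inr (Or.inl s25))))
    · exact Or.inr (Or.inl s26)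
  · rcases hv with rfl|rfl|rfl|rfl|rfl|rfl|rfl|rfl
    · exact Or.inr (Or.inr (Or.inr (Or.inr (Or.inl zb3))))
    · exact Or.inr (Or.inr (Or.inl s30))
    · exact Or.inr (Or.inl s31)
    · exact Or.inr (Or.inr (Or.inr (Or.inr (Or.inr (Or.inr (Or.inl s32))))))
    · exact Or.inl s33
    · exact Or.inr (Or.inr (Or.inr (Or.inr (Or.inr (Or.inr (Or.inr (s34)))))))
    · exact Or.inr (Or.inr (Or.inr (Or.inl s35)))
    · exact Or.inr (Or.inr (Or.inr (Or.inr (Or.inr (Or.inl s36)))))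
  · rcases hv with rfl|rfl|rfl|rfl|rfl|rfl|rfl|rfl
    · exact Or.inr (Or.inr (Or.inr (Or.inr (Or.inr (Or.inl zb4)))))
    · exact Or.inr (Or.inr (Or.inr (Or.inr (Or.inr (Or.inr (Or.inl s40))))))
    · exact Or.inr (Or.inr (Or.inr (Or.inl s41)))
    · exact Or.inr (Or.inr (Or.inl s42))
    · exact Or.inr (Or.inr (Or.inr (Or.inr (Or.inr (Or.inr (Or.inr (s43)))))))
    · exact Or.inl s44
    · exact Or.inr (Or.inl s45)
    · exact Or.inr (Or.inr (Or.inr (Or.inr (Or.inl s46))))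
  · rcases hv with rfl|rfl|rfl|rfl|rfl|rfl|rfl|rfl
    · exact Or.inr (Or.inr (Or.inr (Or.inr (Or.inr (Or.inr (Or.inl zb5))))))
    · exact Or.inr (Or.inr (Or.inr (Or.inr (Or.inr (Or.inl s50)))))
    · exact Or.inr (Or.inr (Or.inr (Or.inr (Or.inr (Or.inr (Or.inr (s51)))))))
    · exact Or.inr (Or.inr (Or.inr (Or.inr (Or.inl s52))))
    · exact Or.inr (Or.inr (Or.inr (Or.inl s53)))
    · exact Or.inr (Or.inl s54)
    · exact Or.inl s55
    · exact Or.inr (Or.inr (Or.inl s56))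
  · rcases hv with rfl|rfl|rfl|rfl|rfl|rfl|rfl|rfl
    · exact Or.inr (Or.inr (Or.inr (Or.inr (Or.inr (Or.inr (Or.inr (zb6)))))))
    · exact Or.inr (Or.inr (Or.inr (Or.inl s60)))
    · exact Or.inr (Or.inr (Or.inr (Or.inr (Or.inr (Or.inr (Or.inl s61))))))
    · exact Or.inr (Or.inl s62)
    · exact Or.inr (Or.inr (Or.inr (Or.inr (Or.inr (Or.inl s63)))))
    · exact Or.inr (Or.inr (Or.inr (Or.inr (Or.inl s64))))
    · exact Or.inr (Or.inr (Or.inl s65))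
    · exact Or.inl s66

lemma set_perm {K : Type*} [Zero K] (A0 A1 A2 A3 A4 A5 A6 : K) :
    ({0, A0, A5, A3, A1, A6, A4, A2} : Set K) = {0, A0, A1, A2, A3, A4, A5, A6} := by
  ext y
  simp only [Set.mem_insert_iff, Set.mem_singleton_iff]
  tauto

lemma subgroup_of_closed {K : Type*} [AddGroup K] (hneg : ∀ a : K, -a = a)
    (S : Set K) (h0 : (0:K) ∈ S) (hadd : ∀ a ∈ S, ∀ b ∈ S, a + b ∈ S) :
    ∃ G : AddSubgroup K, (G : Set K) = S :=
  ⟨{ carrier := S, zero_mem' := h0,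
     add_mem' := fun ha hb => hadd _ ha _ hb,
     neg_mem' := fun {a} ha => by rw [hneg]; exact ha }, rfl⟩

/-- A set `{0, 1, x, x³, x⁷, x¹⁵, x³¹, x⁶³}` of eight distinct elements of
`GF(2^7)` is an additive subgroup if and only if `1 + x = x⁷` or `1 + x³ = x⁷`. -/
theorem additive_subgroup_iff
    (x : GaloisField 2 7)
    (hdist : ([0, 1, x, x ^ 3, x ^ 7, x ^ 15, x ^ 31, x ^ 63] :
      List (GaloisField 2 7)).Nodup) :
    (∃ G : AddSubgroup (GaloisField 2 7),
        (G : Set (GaloisField 2 7)) =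
          {0, 1, x, x ^ 3, x ^ 7, x ^ 15, x ^ 31, x ^ 63}) ↔
      (1 + x = x ^ 7 ∨ 1 + x ^ 3 = x ^ 7) := by
  have h2 : (2 : GaloisField 2 7) = 0 := by
    exact_mod_cast CharP.cast_eq_zero (GaloisField 2 7) 2
  -- distinctness facts
  simp only [List.nodup_cons, List.mem_cons, List.not_mem_nil, or_false,
    not_or, List.nodup_nil, and_true] at hdist
  obtain ⟨⟨h01, h0x, h0x3, h0x7, h0x15, h0x31, h0x63⟩,
    ⟨h1x, h1x3, h1x7, h1x15, h1x31, h1x63⟩,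
    ⟨hxx3, hxx7, hxx15, hxx31, hxx63⟩,
    ⟨hx3x7, hx3x15, hx3x31, hx3x63⟩, ⟨hx7x15, hx7x31, hx7x63⟩,
    ⟨hx15x31, hx15x63⟩, hx31x63, -⟩ := hdist
  have hx0 : x ≠ 0 := fun h => h0x h.symm
  have h127 : x ^ 127 = 1 := by
    haveI : Fintype (GaloisField 2 7) := Fintype.ofFinite _
    have hc : Fintype.card (GaloisField 2 7) = 2 ^ 7 := by
      rw [← Nat.card_eq_fintype_card]; exact GaloisField.card 2 7 (by norm_num)
    have := FiniteField.pow_card_sub_one_eq_one x hx0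
    rw [hc] at this
    norm_num at this
    exact this
  constructor
  · rintro ⟨G, hG⟩
    have h1m : (1 : GaloisField 2 7) ∈ G := by
      rw [← SetLike.mem_coe, hG]
      exact Set.mem_insert_iff.mpr (Or.inr (Or.inl rfl))
    have hxm : x ∈ G := by
      rw [← SetLike.mem_coe, hG]
      exact Set.mem_insert_iff.mpr (Or.inr (Or.inr (Or.inl rfl)))
    have hs : (1 + x : GaloisField 2 7) ∈ (G : Set (GaloisField 2 7)) :=
      G.add_mem h1m hxm
    rw [hG] at hs
    simp only [Set.mem_insert_iff, Set.mem_singleton_iff] at hs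
    rcases hs with h | h | h | h | h | h | h | h
    · exact absurd (by linear_combination -h + h2 : (1:GaloisField 2 7) = x) h1x
    · exact absurd (by linear_combination h : x = (0:GaloisField 2 7)) hx0
    · exact absurd (by linear_combination h : (1:GaloisField 2 7) = 0) one_ne_zero
    · -- 1 + x = x³ : contradiction, get 1 = x⁷
      have r1 : x + x ^ 3 = x ^ 7 := by linear_combination sqx_aux h2 x h
      exact absurd (by linear_combination h + r1 - x * h2 :
        (1:GaloisField 2 7) = x ^ 7) h1x7
    · exact Or.inl h
    · -- 1 + x = x¹⁵ : contradiction, x³ = x¹⁵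
      have r1 : x + x ^ 3 = x ^ 31 := by linear_combination sqx_aux h2 x h
      have r2 : x ^ 3 + x ^ 7 = x ^ 63 := by linear_combination sqx_aux h2 x r1
      have r3 : x ^ 7 + x ^ 15 = 1 := by linear_combination sqx_aux h2 x r2 + h127
      have r4 : x ^ 15 + x ^ 31 = x := by linear_combination sqx_aux h2 x r3
      exact absurd (by linear_combination r1 + r4 - x ^ 15 * h2 :
        x ^ 3 = x ^ 15) hx3x15
    · -- 1 + x = x³¹ : gives 1 + x³ = x⁷
      have r1 : x + x ^ 3 = x ^ 63 := by linear_combination sqx_aux h2 x h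
      have r2 : x ^ 3 + x ^ 7 = 1 := by linear_combination sqx_aux h2 x r1 + h127
      exact Or.inr (by linear_combination -r2 + x ^ 3 * h2)
    · -- 1 + x = x⁶³ : contradiction, x³ = x⁶³
      have r1 : x + x ^ 3 = 1 := by linear_combination sqx_aux h2 x h + h127
      exact absurd (by linear_combination h + r1 - x * h2 :
        x ^ 3 = x ^ 63) hx3x63
  · intro hcase
    have hneg : ∀ a : GaloisField 2 7, -a = a := fun a => CharTwo.neg_eq a
    have h0S : (0 : GaloisField 2 7) ∈
        ({0, 1, x, x ^ 3, x ^ 7, x ^ 15, x ^ 31, x ^ 63} : Set (GaloisField 2 7)) :=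
      Set.mem_insert _ _
    rcases hcase with h | h
    · -- case A
      have r1 : x + x ^ 3 = x ^ 15 := by linear_combination sqx_aux h2 x h
      have r2 : x ^ 3 + x ^ 7 = x ^ 31 := by linear_combination sqx_aux h2 x r1
      have r3 : x ^ 7 + x ^ 15 = x ^ 63 := by linear_combination sqx_aux h2 x r2
      have r4 : x ^ 15 + x ^ 31 = 1 := by linear_combination sqx_aux h2 x r3 + h127
      have r5 : x ^ 31 + x ^ 63 = x := by linear_combination sqx_aux h2 x r4
      have r6 : x ^ 63 + 1 = x ^ 3 := by linear_combination sqx_aux h2 x r5 - h127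
      exact subgroup_of_closed hneg _ h0S
        (closed_lines h2 1 x (x ^ 3) (x ^ 7) (x ^ 15) (x ^ 31) (x ^ 63)
          h r1 r2 r3 r4 r5 r6)
    · -- case B
      have r1 : x + x ^ 7 = x ^ 15 := by linear_combination sqx_aux h2 x h
      have r2 : x ^ 3 + x ^ 15 = x ^ 31 := by linear_combination sqx_aux h2 x r1
      have r3 : x ^ 7 + x ^ 31 = x ^ 63 := by linear_combination sqx_aux h2 x r2
      have r4 : x ^ 15 + x ^ 63 = 1 := by linear_combination sqx_aux h2 x r3 + h127
      have r5 : x ^ 31 + 1 = x := by linear_combination sqx_aux h2 x r4 - h127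
      have r6 : x ^ 63 + x = x ^ 3 := by linear_combination sqx_aux h2 x r5
      have hclosed := closed_lines h2 1 (x ^ 31) (x ^ 7) x (x ^ 63) (x ^ 15) (x ^ 3)
        (by linear_combination r5) (by linear_combination r3)
        (by linear_combination r1) (by linear_combination r6)
        (by linear_combination r4) (by linear_combination r2)
        (by linear_combination h)
      have hSeq := set_perm (1 : GaloisField 2 7) x (x ^ 3) (x ^ 7) (x ^ 15)
        (x ^ 31) (x ^ 63)
      rw [hSeq] at hclosed
      exact subgroup_of_closed hneg _ h0S hclosed
end

section
/- The solution sets in GF(2^7) of the equations 1 + x = x⁷ and 1 + x³ = x⁷ are disjoint, and each has exactly 7 elements. -/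
open Polynomial

set_option maxRecDepth 8000
set_option maxHeartbeats 2000000

local notation "K" => GaloisField 2 7

lemma two_eq_zero : (2 : K) = 0 := by
  have h := CharP.cast_eq_zero K 2
  exact_mod_cast h

noncomputable instance : Fintype K := Fintype.ofFinite _

lemma card_K : Fintype.card K = 128 := by
  rw [← Nat.card_eq_fintype_card, GaloisField.card 2 7 (by norm_num)]; norm_num

lemma pow_128 (x : K) : x ^ 128 = x := by
  rw [← card_K]; exact FiniteField.pow_card x

noncomputable def F1 : K[X] := X ^ 7 + X + 1

noncomputable def F2 : K[X] := X ^ 7 + X ^ 3 + 1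

lemma F1_natDegree : (F1).natDegree = 7 := by unfold F1; compute_degree!

lemma F2_natDegree : (F2).natDegree = 7 := by unfold F2; compute_degree!

lemma F1_eval (x : K) : (F1).eval x = x ^ 7 + x + 1 := by unfold F1; simp

lemma F2_eval (x : K) : (F2).eval x = x ^ 7 + x ^ 3 + 1 := by unfold F2; simp

lemma card_root_set_le {L : Type*} [Field L] (p : L[X]) (hp : p ≠ 0) :
    {x : L | p.eval x = 0}.ncard ≤ p.natDegree := by
  classical
  have hs : {x : L | p.eval x = 0} = ↑p.roots.toFinset := by
    ext x
    simp [Polynomial.mem_roots', hp, Polynomial.IsRoot]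
  rw [hs, Set.ncard_coe_finset]
  exact le_trans (Multiset.toFinset_card_le _) (Polynomial.card_roots' p)

lemma count_lemma {L : Type*} [Field L] [Fintype L] (F Q : L[X]) (hF : F ≠ 0) (hQ : Q ≠ 0)
    (h : ∀ x : L, F.eval x * Q.eval x = 0)
    (hcard : Fintype.card L = F.natDegree + Q.natDegree) :
    {x : L | F.eval x = 0}.ncard = F.natDegree := by
  have hA := card_root_set_le F hF
  have hB := card_root_set_le Q hQ
  have hunion : {x : L | F.eval x = 0} ∪ {x : L | Q.eval x = 0} = Set.univ := by
    ext x
    simp only [Set.mem_union, Set.mem_setOf_eq, Set.mem_univ, iff_true]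
    exact mul_eq_zero.mp (h x)
  have h1 : Fintype.card L ≤ {x : L | F.eval x = 0}.ncard + {x : L | Q.eval x = 0}.ncard := by
    calc Fintype.card L = (Set.univ : Set L).ncard := by
          rw [Set.ncard_univ, Nat.card_eq_fintype_card]
      _ = ({x : L | F.eval x = 0} ∪ {x : L | Q.eval x = 0}).ncard := by rw [hunion]
      _ ≤ _ := Set.ncard_union_le _ _
  omega

noncomputable def Q1 : (GaloisField 2 7)[X] := X ^ 121 + X ^ 115 + X ^ 114 + X ^ 109 + X ^ 107 + X ^ 103 + X ^ 102 + X ^ 101 + X ^ 100 + X ^ 97 + X ^ 93 + X ^ 91 + X ^ 90 + X ^ 87 + X ^ 86 + X ^ 85 + X ^ 83 + X ^ 81 + X ^ 78 + X ^ 77 + X ^ 76 + X ^ 75 + X ^ 74 + X ^ 72 + X ^ 67 + X ^ 66 + X ^ 65 + X ^ 61 + X ^ 58 + X ^ 55 + X ^ 54 + X ^ 52 + X ^ 51 + X ^ 49 + X ^ 47 + X ^ 46 + X ^ 44 + X ^ 43 + X ^ 42 + X ^ 41 + X ^ 39 + X ^ 38 + X ^ 34 + X ^ 33 + X ^ 31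 + X ^ 28 + X ^ 26 + X ^ 25 + X ^ 24 + X ^ 22 + X ^ 21 + X ^ 20 + X ^ 17 + X ^ 16 + X ^ 13 + X ^ 11 + X ^ 9 + X ^ 7 + X ^ 6 + X ^ 5 + X ^ 4 + X ^ 3 + X ^ 2 + X

lemma Q1_natDegree : (Q1).natDegree = 121 := by
  unfold Q1; compute_degree!

lemma Q1_eval (x : GaloisField 2 7) : (Q1).eval x = x ^ 121 + x ^ 115 + x ^ 114 + x ^ 109 + x ^ 107 + x ^ 103 + x ^ 102 + x ^ 101 + x ^ 100 + x ^ 97 + x ^ 93 + x ^ 91 + x ^ 90 + x ^ 87 + x ^ 86 + x ^ 85 + x ^ 83 + x ^ 81 + x ^ 78 + x ^ 77 + x ^ 76 + x ^ 75 + x ^ 74 + x ^ 72 + x ^ 67 + x ^ 66 + x ^ 65 + x ^ 61 + x ^ 58 + x ^ 55 + x ^ 54 + x ^ 52 + x ^ 51 + x ^ 49 + x ^ 47 + x ^ 46 + x ^ 44 + x ^ 43 + x ^ 42 + x ^ 41 + x ^ 39 + x ^ 38 + x ^ 34 + x ^ 33 + x ^ 31 + x ^ 28 + x ^ 26 + x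 ^ 25 + x ^ 24 + x ^ 22 + x ^ 21 + x ^ 20 + x ^ 17 + x ^ 16 + x ^ 13 + x ^ 11 + x ^ 9 + x ^ 7 + x ^ 6 + x ^ 5 + x ^ 4 + x ^ 3 + x ^ 2 + x := by
  unfold Q1; simp

lemma key1 (x : GaloisField 2 7) :
    (F1).eval x * (Q1).eval x = 0 := by
  have h2 : (2 : GaloisField 2 7) = 0 := two_eq_zero
  have hpow : x ^ 128 = x := pow_128 x
  rw [F1_eval, Q1_eval]
  calc (x ^ 7 + x + 1) * (x ^ 121 + x ^ 115 + x ^ 114 + x ^ 109 + x ^ 107 + x ^ 103 + x ^ 102 + x ^ 101 + x ^ 100 + x ^ 97 + x ^ 93 + x ^ 91 + x ^ 90 + x ^ 87 + x ^ 86 + x ^ 85 + x ^ 83 + x ^ 81 + x ^ 78 + x ^ 77 + x ^ 76 + x ^ 75 + x ^ 74 + x ^ 72 + x ^ 67 + x ^ 66 + x ^ 65 + x ^ 61 + x ^ 58 + x ^ 55 + x ^ 54 + x ^ 52 + x ^ 51 + x ^ 49 + x ^ 47 + x ^ 46 + x ^ 44 + x ^ 43 + x ^ 42 + x ^ 41 +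 x ^ 39 + x ^ 38 + x ^ 34 + x ^ 33 + x ^ 31 + x ^ 28 + x ^ 26 + x ^ 25 + x ^ 24 + x ^ 22 + x ^ 21 + x ^ 20 + x ^ 17 + x ^ 16 + x ^ 13 + x ^ 11 + x ^ 9 + x ^ 7 + x ^ 6 + x ^ 5 + x ^ 4 + x ^ 3 + x ^ 2 + x)
      = x ^ 128 + x + 2 * (x ^ 122 + x ^ 121 + x ^ 116 + x ^ 115 + x ^ 114 + x ^ 110 + x ^ 109 + x ^ 108 + x ^ 107 + x ^ 104 + x ^ 103 + x ^ 102 + x ^ 101 + x ^ 100 + x ^ 98 + x ^ 97 + x ^ 94 + x ^ 93 + x ^ 92 + x ^ 91 + x ^ 90 + x ^ 88 + x ^ 87 + x ^ 86 + x ^ 85 + x ^ 84 + x ^ 83 + x ^ 82 + x ^ 81 + x ^ 79 + x ^ 78 + x ^ 77 + x ^ 76 + x ^ 75 + x ^ 74 + x ^ 73 + x ^ 72 + x ^ 68 + x ^ 67 + x ^ 66 + x ^ 65 + x ^ 62 + x ^ 61 + x ^ 59 + x ^ 58 + x ^ 56 + x ^ 55 + x ^ 54 + x ^ 53 + x ^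 52 + x ^ 51 + x ^ 50 + x ^ 49 + x ^ 48 + x ^ 47 + x ^ 46 + x ^ 45 + x ^ 44 + x ^ 43 + x ^ 42 + x ^ 41 + x ^ 40 + x ^ 39 + x ^ 38 + x ^ 35 + x ^ 34 + x ^ 33 + x ^ 32 + x ^ 31 + x ^ 29 + x ^ 28 + x ^ 27 + x ^ 26 + x ^ 25 + x ^ 24 + x ^ 23 + x ^ 22 + x ^ 21 + x ^ 20 + x ^ 18 + x ^ 17 + x ^ 16 + x ^ 14 + x ^ 13 + x ^ 12 + x ^ 11 + x ^ 10 + x ^ 9 + x ^ 8 + x ^ 7 + x ^ 6 + x ^ 5 + x ^ 4 + x ^ 3 + x ^ 2) := by ring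
    _ = x + x + 0 * (x ^ 122 + x ^ 121 + x ^ 116 + x ^ 115 + x ^ 114 + x ^ 110 + x ^ 109 + x ^ 108 + x ^ 107 + x ^ 104 + x ^ 103 + x ^ 102 + x ^ 101 + x ^ 100 + x ^ 98 + x ^ 97 + x ^ 94 + x ^ 93 + x ^ 92 + x ^ 91 + x ^ 90 + x ^ 88 + x ^ 87 + x ^ 86 + x ^ 85 + x ^ 84 + x ^ 83 + x ^ 82 + x ^ 81 + x ^ 79 + x ^ 78 + x ^ 77 + x ^ 76 + x ^ 75 + x ^ 74 + x ^ 73 + x ^ 72 + x ^ 68 + x ^ 67 + x ^ 66 + x ^ 65 + x ^ 62 + x ^ 61 + x ^ 59 + x ^ 58 + x ^ 56 + x ^ 55 + x ^ 54 + x ^ 53 + x ^ 52 + x ^ 51 + x ^ 50 + x ^ 49 + x ^ 48 + x ^ 47 + x ^ 46 + x ^ 45 + x ^ 44 + x ^ 43 + x ^ 42 + x ^ 41 + x ^ 40 + x ^ 39 + x ^ 38 + x ^ 35 + x ^ 34 + x ^ 33 + x ^ 32 + x ^ 31 + x ^ 29 + x ^ 28 + x ^ 27 + x ^ 26 + x ^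 25 + x ^ 24 + x ^ 23 + x ^ 22 + x ^ 21 + x ^ 20 + x ^ 18 + x ^ 17 + x ^ 16 + x ^ 14 + x ^ 13 + x ^ 12 + x ^ 11 + x ^ 10 + x ^ 9 + x ^ 8 + x ^ 7 + x ^ 6 + x ^ 5 + x ^ 4 + x ^ 3 + x ^ 2) := by rw [hpow, h2]
    _ = 2 * x := by ring
    _ = 0 := by rw [h2, zero_mul]

noncomputable def Q2 : (GaloisField 2 7)[X] := X ^ 121 + X ^ 117 + X ^ 114 + X ^ 113 + X ^ 109 + X ^ 107 + X ^ 106 + X ^ 105 + X ^ 103 + X ^ 101 + X ^ 100 + X ^ 98 + X ^ 97 + X ^ 91 + X ^ 90 + X ^ 87 + X ^ 86 + X ^ 84 + X ^ 82 + X ^ 79 + X ^ 78 + X ^ 77 + X ^ 74 + X ^ 73 + X ^ 72 + X ^ 71 + X ^ 69 + X ^ 68 + X ^ 66 + X ^ 61 + X ^ 59 + X ^ 57 + X ^ 55 + X ^ 54 + X ^ 53 + X ^ 52 + X ^ 51 + X ^ 49 + X ^ 46 + X ^ 44 + X ^ 40 + X ^ 39 + X ^ 37 + X ^ 36 + X ^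 35 + X ^ 31 + X ^ 30 + X ^ 29 + X ^ 28 + X ^ 27 + X ^ 26 + X ^ 25 + X ^ 20 + X ^ 19 + X ^ 18 + X ^ 16 + X ^ 15 + X ^ 14 + X ^ 13 + X ^ 10 + X ^ 8 + X ^ 7 + X ^ 4 + X

lemma Q2_natDegree : (Q2).natDegree = 121 := by
  unfold Q2; compute_degree!

lemma Q2_eval (x : GaloisField 2 7) : (Q2).eval x = x ^ 121 + x ^ 117 + x ^ 114 + x ^ 113 + x ^ 109 + x ^ 107 + x ^ 106 + x ^ 105 + x ^ 103 + x ^ 101 + x ^ 100 + x ^ 98 + x ^ 97 + x ^ 91 + x ^ 90 + x ^ 87 + x ^ 86 + x ^ 84 + x ^ 82 + x ^ 79 + x ^ 78 + x ^ 77 + x ^ 74 + x ^ 73 + x ^ 72 + x ^ 71 + x ^ 69 + x ^ 68 + x ^ 66 + x ^ 61 + x ^ 59 + x ^ 57 + x ^ 55 + x ^ 54 + x ^ 53 + x ^ 52 + x ^ 51 + x ^ 49 + x ^ 46 + x ^ 44 + x ^ 40 + x ^ 39 + x ^ 37 + x ^ 36 + x ^ 35 + x ^ 31 + x ^ 30 +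 x ^ 29 + x ^ 28 + x ^ 27 + x ^ 26 + x ^ 25 + x ^ 20 + x ^ 19 + x ^ 18 + x ^ 16 + x ^ 15 + x ^ 14 + x ^ 13 + x ^ 10 + x ^ 8 + x ^ 7 + x ^ 4 + x := by
  unfold Q2; simp

lemma key2 (x : GaloisField 2 7) :
    (F2).eval x * (Q2).eval x = 0 := by
  have h2 : (2 : GaloisField 2 7) = 0 := two_eq_zero
  have hpow : x ^ 128 = x := pow_128 x
  rw [F2_eval, Q2_eval]
  calc (x ^ 7 + x ^ 3 + 1) * (x ^ 121 + x ^ 117 + x ^ 114 + x ^ 113 + x ^ 109 + x ^ 107 + x ^ 106 + x ^ 105 + x ^ 103 + x ^ 101 + x ^ 100 + x ^ 98 + x ^ 97 + x ^ 91 + x ^ 90 + x ^ 87 + x ^ 86 + x ^ 84 + x ^ 82 + x ^ 79 + x ^ 78 + x ^ 77 + x ^ 74 + x ^ 73 + x ^ 72 + x ^ 71 + x ^ 69 + x ^ 68 + x ^ 66 + x ^ 61 + x ^ 59 + x ^ 57 + x ^ 55 + x ^ 54 + x ^ 53 + x ^ 52 + x ^ 51 + x ^ 49 + x ^ 46 +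 x ^ 44 + x ^ 40 + x ^ 39 + x ^ 37 + x ^ 36 + x ^ 35 + x ^ 31 + x ^ 30 + x ^ 29 + x ^ 28 + x ^ 27 + x ^ 26 + x ^ 25 + x ^ 20 + x ^ 19 + x ^ 18 + x ^ 16 + x ^ 15 + x ^ 14 + x ^ 13 + x ^ 10 + x ^ 8 + x ^ 7 + x ^ 4 + x)
      = x ^ 128 + x + 2 * (x ^ 124 + x ^ 121 + x ^ 120 + x ^ 117 + x ^ 116 + x ^ 114 + x ^ 113 + x ^ 112 + x ^ 110 + x ^ 109 + x ^ 108 + x ^ 107 + x ^ 106 + x ^ 105 + x ^ 104 + x ^ 103 + x ^ 101 + x ^ 100 + x ^ 98 + x ^ 97 + x ^ 94 + x ^ 93 + x ^ 91 + x ^ 90 + x ^ 89 + x ^ 87 + x ^ 86 + x ^ 85 + x ^ 84 + x ^ 82 + x ^ 81 + x ^ 80 + x ^ 79 + x ^ 78 + x ^ 77 + x ^ 76 + x ^ 75 + x ^ 74 + x ^ 73 + x ^ 72 + x ^ 71 + x ^ 69 + x ^ 68 + x ^ 66 + x ^ 64 + x ^ 62 + x ^ 61 + x ^ 60 + x ^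 59 + x ^ 58 + x ^ 57 + x ^ 56 + x ^ 55 + x ^ 54 + x ^ 53 + x ^ 52 + x ^ 51 + x ^ 49 + x ^ 47 + x ^ 46 + x ^ 44 + x ^ 43 + x ^ 42 + x ^ 40 + x ^ 39 + x ^ 38 + x ^ 37 + x ^ 36 + x ^ 35 + x ^ 34 + x ^ 33 + x ^ 32 + x ^ 31 + x ^ 30 + x ^ 29 + x ^ 28 + x ^ 27 + x ^ 26 + x ^ 25 + x ^ 23 + x ^ 22 + x ^ 21 + x ^ 20 + x ^ 19 + x ^ 18 + x ^ 17 + x ^ 16 + x ^ 15 + x ^ 14 + x ^ 13 + x ^ 11 + x ^ 10 + x ^ 8 + x ^ 7 + x ^ 4) := by ring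
    _ = x + x + 0 * (x ^ 124 + x ^ 121 + x ^ 120 + x ^ 117 + x ^ 116 + x ^ 114 + x ^ 113 + x ^ 112 + x ^ 110 + x ^ 109 + x ^ 108 + x ^ 107 + x ^ 106 + x ^ 105 + x ^ 104 + x ^ 103 + x ^ 101 + x ^ 100 + x ^ 98 + x ^ 97 + x ^ 94 + x ^ 93 + x ^ 91 + x ^ 90 + x ^ 89 + x ^ 87 + x ^ 86 + x ^ 85 + x ^ 84 + x ^ 82 + x ^ 81 + x ^ 80 + x ^ 79 + x ^ 78 + x ^ 77 + x ^ 76 + x ^ 75 + x ^ 74 + x ^ 73 + x ^ 72 + x ^ 71 + x ^ 69 + x ^ 68 + x ^ 66 + x ^ 64 + x ^ 62 + x ^ 61 + x ^ 60 + x ^ 59 + x ^ 58 + x ^ 57 + x ^ 56 + x ^ 55 + x ^ 54 + x ^ 53 + x ^ 52 + x ^ 51 + x ^ 49 + x ^ 47 + x ^ 46 + x ^ 44 + x ^ 43 + x ^ 42 + x ^ 40 + x ^ 39 + x ^ 38 + x ^ 37 + x ^ 36 + x ^ 35 + x ^ 34 + x ^ 33 + x ^ 32 + x ^ 31 + x ^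 30 + x ^ 29 + x ^ 28 + x ^ 27 + x ^ 26 + x ^ 25 + x ^ 23 + x ^ 22 + x ^ 21 + x ^ 20 + x ^ 19 + x ^ 18 + x ^ 17 + x ^ 16 + x ^ 15 + x ^ 14 + x ^ 13 + x ^ 11 + x ^ 10 + x ^ 8 + x ^ 7 + x ^ 4) := by rw [hpow, h2]
    _ = 2 * x := by ring
    _ = 0 := by rw [h2, zero_mul]

lemma set1_eq : {x : K | 1 + x = x ^ 7} = {x : K | (F1).eval x = 0} := by
  ext x
  have h2 : (2 : K) = 0 := two_eq_zero
  simp only [Set.mem_setOf_eq, F1_eval]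
  constructor
  · intro h; linear_combination -h + (1 + x) * h2
  · intro h; linear_combination -h + (1 + x) * h2

lemma set2_eq : {x : K | 1 + x ^ 3 = x ^ 7} = {x : K | (F2).eval x = 0} := by
  ext x
  have h2 : (2 : K) = 0 := two_eq_zero
  simp only [Set.mem_setOf_eq, F2_eval]
  constructor
  · intro h; linear_combination -h + (1 + x ^ 3) * h2
  · intro h; linear_combination -h + (1 + x ^ 3) * h2

/-- The solution sets of `1 + x = x⁷` and `1 + x³ = x⁷` in `GF(2^7)` are
disjoint and each has exactly `7` elements. -/
theorem solution_sets_disjoint_and_card_seven :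
    ({x : GaloisField 2 7 | 1 + x = x ^ 7} ∩
        {x : GaloisField 2 7 | 1 + x ^ 3 = x ^ 7} = ∅) ∧
      Set.ncard {x : GaloisField 2 7 | 1 + x = x ^ 7} = 7 ∧
      Set.ncard {x : GaloisField 2 7 | 1 + x ^ 3 = x ^ 7} = 7 := by
  have h2 : (2 : K) = 0 := two_eq_zero
  refine ⟨?_, ?_, ?_⟩
  · rw [Set.eq_empty_iff_forall_notMem]
    rintro x ⟨ha, hb⟩
    simp only [Set.mem_setOf_eq] at ha hb
    have hxx : x ^ 3 = x := by linear_combination hb - ha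
    have hz : x * ((x + 1) * (x + 1)) = 0 := by
      linear_combination hxx + (x ^ 2 + x) * h2
    rcases mul_eq_zero.mp hz with h0 | h1
    · rw [h0] at ha
      exact one_ne_zero (by linear_combination ha : (1 : K) = 0)
    · rcases mul_eq_zero.mp h1 with hp | hp
      all_goals {
        have hx1 : x = 1 := by linear_combination hp - h2
        rw [hx1] at ha
        exact one_ne_zero (by linear_combination ha : (1 : K) = 0) }
  · have hF : F1 ≠ 0 := by
      intro h
      have hd := F1_natDegree
      rw [h] at hd; simp at hd
    have hQ : Q1 ≠ 0 := by
      intro h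
      have hd := Q1_natDegree
      rw [h] at hd; simp at hd
    rw [set1_eq,
      count_lemma F1 Q1 hF hQ key1 (by rw [card_K, F1_natDegree, Q1_natDegree]),
      F1_natDegree]
  · have hF : F2 ≠ 0 := by
      intro h
      have hd := F2_natDegree
      rw [h] at hd; simp at hd
    have hQ : Q2 ≠ 0 := by
      intro h
      have hd := Q2_natDegree
      rw [h] at hd; simp at hd
    rw [set2_eq,
      count_lemma F2 Q2 hF hQ key2 (by rw [card_K, F2_natDegree, Q2_natDegree]),
      F2_natDegree]
end

section
/- Let σ be a nontrivial automorphism of GF(2^7), so σ(y) = y^{2^k} with 1 ≤ k ≤ 6, and let l ∈ {1,…,6} be the unique integer with kl ≡ 1 (mod 7). Set s_i = σ + σ² + … + σ^i viewed as the exponent map y ↦ y^{2^k + 2^{2k} + … + 2^{ik}}. Then, setting x = w^{-s_l/2} for a nonzero w, for every i ∈ {1,…,6} the element w^{-s_i/2} lies in {x, x³, x⁷, x¹⁵, x³¹, x⁶³}; more precisely, for each m ∈ {3,7,15,31,63} there is a unique j_m ∈ {1,…,6} with m·(2^k + 2^{2k} + … + 2^{lk}) ≡ 2^k + 2^{2k}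 + … + 2^{j_m k} (mod 127), and j₃ ≡ 2l (mod 7). -/
/-- `expSum k i = 2^k + 2^{2k} + ⋯ + 2^{ik}`, the exponent corresponding to
`σ + σ² + ⋯ + σⁱ` where `σ : y ↦ y^{2^k}`. -/
def expSum (k i : ℕ) : ℕ := (Finset.Icc 1 i).sum fun j => 2 ^ (j * k)

/-- `singerElt w k i = w^{-(σ + σ² + ⋯ + σⁱ)/2} = (√w)^{-(σ + ⋯ + σⁱ)}`
(each `2^{jk}` with `j ≥ 1` is even, so `expSum k i / 2` is exact). -/
noncomputable def singerElt (w : GaloisField 2 7) (k i : ℕ) : GaloisField 2 7 :=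
  (w ^ (expSum k i / 2))⁻¹

lemma gf_pow_mod (w : GaloisField 2 7) (hw : w ≠ 0) (a : ℕ) : w ^ a = w ^ (a % 127) := by
  haveI : Fintype (GaloisField 2 7) := Fintype.ofFinite (GaloisField 2 7)
  have hc : Fintype.card (GaloisField 2 7) = 128 := by
    rw [← Nat.card_eq_fintype_card, GaloisField.card 2 7 (by norm_num)]; norm_num
  have h1 : w ^ 127 = 1 := by
    have := FiniteField.pow_card_sub_one_eq_one w hw
    rwa [hc] at this
  conv_lhs => rw [← Nat.div_add_mod a 127, pow_add, pow_mul, h1, one_pow, one_mul]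

lemma gf_key (w : GaloisField 2 7) (hw : w ≠ 0) (k l i m : ℕ)
    (h : (expSum k i / 2) % 127 = (expSum k l / 2 * m) % 127) :
    singerElt w k i = singerElt w k l ^ m := by
  unfold singerElt
  rw [inv_pow, ← pow_mul, gf_pow_mod w hw (expSum k i / 2), h, ← gf_pow_mod w hw]

lemma gf_exu (k l m j0 : ℕ) (h1 : 1 ≤ j0) (h2 : j0 ≤ 6)
    (h3 : m * expSum k l % 127 = expSum k j0 % 127)
    (h4 : ∀ y, 1 ≤ y → y ≤ 6 → m * expSum k l % 127 = expSum k y % 127 → y = j0) :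
    ∃! j : ℕ, j ∈ Finset.Icc 1 6 ∧ m * expSum k l ≡ expSum k j [MOD 127] := by
  refine ⟨j0, ⟨Finset.mem_Icc.2 ⟨h1, h2⟩, h3⟩, ?_⟩
  rintro y ⟨hy, hc⟩
  rw [Finset.mem_Icc] at hy
  exact h4 y hy.1 hy.2 hc

/-- Lemma 6 of the paper: with `σ : y ↦ y^{2^k}` nontrivial, `kl ≡ 1 (mod 7)`,
and `x = (√w)^{-(σ+⋯+σ^l)}`, every `(√w)^{-(σ+⋯+σⁱ)}` lies in
`{x, x³, x⁷, x¹⁵, x³¹, x⁶³}`; more precisely, for each `m ∈ {3,7,15,31,63}`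
there is a unique `j ∈ {1,…,6}` with
`m·(2^k + ⋯ + 2^{lk}) ≡ 2^k + ⋯ + 2^{jk} (mod 127)`, and `j₃ ≡ 2l (mod 7)`. -/
theorem singer_set_eq_powers (k l : ℕ)
    (hk : k ∈ Finset.Icc 1 6) (hl : l ∈ Finset.Icc 1 6)
    (hkl : k * l % 7 = 1)
    (w : GaloisField 2 7) (hw : w ≠ 0) :
    (∀ i ∈ Finset.Icc 1 6,
        singerElt w k i ∈
          ({singerElt w k l, singerElt w k l ^ 3, singerElt w k l ^ 7,
            singerElt w k l ^ 15, singerElt w k l ^ 31, singerElt w k l ^ 63} :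
            Set (GaloisField 2 7))) ∧
      (∀ m ∈ ({3, 7, 15, 31, 63} : Finset ℕ),
        ∃! j : ℕ, j ∈ Finset.Icc 1 6 ∧
          m * expSum k l ≡ expSum k j [MOD 127]) ∧
      (∀ j ∈ Finset.Icc 1 6,
        3 * expSum k l ≡ expSum k j [MOD 127] → j % 7 = 2 * l % 7) := by
  simp only [Finset.mem_Icc] at hk hl
  obtain ⟨hk1, hk2⟩ := hk
  obtain ⟨hl1, hl2⟩ := hl
  refine ⟨?_, ?_, ?_⟩
  · intro i hi
    simp only [Finset.mem_Icc] at hi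
    obtain ⟨hi1, hi2⟩ := hi
    simp only [Set.mem_insert_iff, Set.mem_singleton_iff]
    interval_cases k <;> interval_cases l <;> first
      | omega
      | (interval_cases i <;> first
          | exact Or.inl ((gf_key w hw _ _ _ 1 (by decide)).trans (pow_one _))
          | exact Or.inr (Or.inl (gf_key w hw _ _ _ 3 (by decide)))
          | exact Or.inr (Or.inr (Or.inl (gf_key w hw _ _ _ 7 (by decide))))
          | exact Or.inr (Or.inr (Or.inr (Or.inl (gf_key w hw _ _ _ 15 (by decide)))))
          | exact Or.inr (Or.inr (Or.inr (Or.inr (Or.inl (gf_key w hw _ _ _ 31 (by decide))))))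
          | exact Or.inr (Or.inr (Or.inr (Or.inr (Or.inr (gf_key w hw _ _ _ 63 (by decide)))))))
  · intro m hm
    interval_cases k <;> interval_cases l <;> first
      | omega
      | (fin_cases hm <;> first
          | exact gf_exu _ _ _ 1 (by norm_num) (by norm_num) (by decide)
              (by intro y hy1 hy2 hc; interval_cases y <;> revert hc <;> decide)
          | exact gf_exu _ _ _ 2 (by norm_num) (by norm_num) (by decide)
              (by intro y hy1 hy2 hc; interval_cases y <;> revert hc <;> decide)
          | exact gf_exu _ _ _ 3 (by norm_num) (by norm_num) (by decide)
              (by intro y hy1 hy2 hc; interval_cases y <;> revert hc <;> decide)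
          | exact gf_exu _ _ _ 4 (by norm_num) (by norm_num) (by decide)
              (by intro y hy1 hy2 hc; interval_cases y <;> revert hc <;> decide)
          | exact gf_exu _ _ _ 5 (by norm_num) (by norm_num) (by decide)
              (by intro y hy1 hy2 hc; interval_cases y <;> revert hc <;> decide)
          | exact gf_exu _ _ _ 6 (by norm_num) (by norm_num) (by decide)
              (by intro y hy1 hy2 hc; interval_cases y <;> revert hc <;> decide))
  · intro j hj hc
    simp only [Finset.mem_Icc] at hj
    obtain ⟨hj1, hj2⟩ := hj
    have hc' : 3 * expSum k l % 127 = expSum k j % 127 := hc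
    interval_cases k <;> interval_cases l <;> first
      | omega
      | (interval_cases j <;> revert hc' <;> decide)
end

section
/- Let w ∈ GF(2^7) \ {0,1} and t ∈ GF(2^7), and consider the matrix A over GF(2^7) with rows (w^{-1}, 0, 0), (t + w^{-1}, w^{-1}, 0), (s, 0, 1) where s² = w^{-1}t + t². The projective semilinear map θ : p ↦ A·p^{σ} with σ the squaring Frobenius fixes the line {(x,y,z) : x = 0} setwise, and stabilizes the line z = 0 if and only if t = 0 or t = w^{-1}. -/
/-- The semilinear map `θ : p ↦ A·p^σ` of `PG(2,2^7)` with `σ` the Frobenius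
and `A` the matrix with rows `(w⁻¹,0,0)`, `(t+w⁻¹,w⁻¹,0)`, `(s,0,1)`,
acting on coordinate triples. -/
noncomputable def thetaMap (w t s : GaloisField 2 7) :
    GaloisField 2 7 × GaloisField 2 7 × GaloisField 2 7 →
      GaloisField 2 7 × GaloisField 2 7 × GaloisField 2 7 :=
  fun p =>
    (w⁻¹ * p.1 ^ 2,
     (t + w⁻¹) * p.1 ^ 2 + w⁻¹ * p.2.1 ^ 2,
     s * p.1 ^ 2 + p.2.2 ^ 2)

/-- `θ` fixes the line `x = 0` setwise, and stabilizes the line `z = 0` if and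
only if `t = 0` or `t = w⁻¹`. -/
theorem thetaMap_fixes_lines (w t s : GaloisField 2 7)
    (hw0 : w ≠ 0) (hw1 : w ≠ 1)
    (hs : s ^ 2 = w⁻¹ * t + t ^ 2) :
    (∀ p : GaloisField 2 7 × GaloisField 2 7 × GaloisField 2 7,
        p ≠ 0 → (p.1 = 0 ↔ (thetaMap w t s p).1 = 0)) ∧
      ((∀ p : GaloisField 2 7 × GaloisField 2 7 × GaloisField 2 7,
          p ≠ 0 → p.2.2 = 0 → (thetaMap w t s p).2.2 = 0) ↔
        (t = 0 ∨ t = w⁻¹)) := by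
  have hwi : (w⁻¹ : GaloisField 2 7) ≠ 0 := inv_ne_zero hw0
  constructor
  · intro p _
    simp only [thetaMap]
    constructor
    · intro h; simp [h]
    · intro h
      rcases mul_eq_zero.1 h with h | h
      · exact absurd h hwi
      · exact pow_eq_zero_iff (by norm_num) |>.1 h
  · constructor
    · intro H
      have h1 : (thetaMap w t s (1, 0, 0)).2.2 = 0 := by
        apply H (1, 0, 0) (by simp [Prod.ext_iff]) rfl
      simp only [thetaMap, one_pow, mul_one] at h1
      have hs0 : s = 0 := by
        have : s + 0 ^ 2 = 0 := h1
        simpa using this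
      have : t * (t + w⁻¹) = 0 := by
        have h2 : (0 : GaloisField 2 7) = w⁻¹ * t + t ^ 2 := by
          rw [← hs]; simp [hs0]
        have : t * (t + w⁻¹) = w⁻¹ * t + t ^ 2 := by ring
        rw [this, ← h2]
      rcases mul_eq_zero.1 this with h | h
      · exact Or.inl h
      · right
        have h2 : t = -w⁻¹ := by linear_combination h
        rw [h2, CharTwo.neg_eq]
    · intro ht p _ hz
      have hs0 : s = 0 := by
        have h2 : s ^ 2 = 0 := by
          rcases ht with h | h
          · rw [hs, h]; ring
          · rw [hs, h]
            have : (w⁻¹ : GaloisField 2 7) * w⁻¹ + w⁻¹ ^ 2 =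
                w⁻¹ ^ 2 + w⁻¹ ^ 2 := by ring
            rw [this, CharTwo.add_self_eq_zero]
        exact pow_eq_zero_iff (by norm_num) |>.1 h2
      simp [thetaMap, hs0, hz]
end

section
/- Let w ∈ GF(2^7) satisfy w⁻⁶ + w + 1 = 0 (equivalently x⁷ + x + 1 = 0 for x = w⁻¹). Then the polynomial (w⁻² + w + 1)t⁴ + (w⁻⁴ + w⁻³ + w⁻² + w⁻¹)t² + w⁻⁴ t in the variable t has exactly four roots in GF(2^7), two of which are t = 0 and t = w⁻¹. -/
/-- If `w⁻⁶ + w + 1 = 0` in `GF(2^7)`, the polynomial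
`(w⁻² + w + 1)t⁴ + (w⁻⁴ + w⁻³ + w⁻² + w⁻¹)t² + w⁻⁴t` has exactly four roots,
two of which are `t = 0` and `t = w⁻¹`. -/
theorem four_roots_case_one (w : GaloisField 2 7)
    (hw0 : w ≠ 0) (hw1 : w ≠ 1)
    (hw : w⁻¹ ^ 6 + w + 1 = 0) :
    Set.ncard {t : GaloisField 2 7 |
        (w⁻¹ ^ 2 + w + 1) * t ^ 4 +
          (w⁻¹ ^ 4 + w⁻¹ ^ 3 + w⁻¹ ^ 2 + w⁻¹) * t ^ 2 + w⁻¹ ^ 4 * t = 0} = 4 ∧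
      (0 : GaloisField 2 7) ∈ {t : GaloisField 2 7 |
        (w⁻¹ ^ 2 + w + 1) * t ^ 4 +
          (w⁻¹ ^ 4 + w⁻¹ ^ 3 + w⁻¹ ^ 2 + w⁻¹) * t ^ 2 + w⁻¹ ^ 4 * t = 0} ∧
      w⁻¹ ∈ {t : GaloisField 2 7 |
        (w⁻¹ ^ 2 + w + 1) * t ^ 4 +
          (w⁻¹ ^ 4 + w⁻¹ ^ 3 + w⁻¹ ^ 2 + w⁻¹) * t ^ 2 + w⁻¹ ^ 4 * t = 0} := by
  classical
  have h2 : (2 : GaloisField 2 7) = 0 := by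
    exact_mod_cast CharP.cast_eq_zero (GaloisField 2 7) 2
  set x := w⁻¹ with hxd
  have hxw : w * x = 1 := mul_inv_cancel₀ hw0
  have hx0 : x ≠ 0 := inv_ne_zero hw0
  have hx1 : x ≠ 1 := fun h => hw1 (by rwa [hxd, inv_eq_one] at h)
  have hx7 : x ^ 7 = x + 1 := by linear_combination x * hw - hxw + (-x - 1) * h2
  have hwx : w = x ^ 6 + 1 := by linear_combination hw + (-x ^ 6 - 1) * h2
  have hadd : ∀ u v : GaloisField 2 7, u + v = 0 ↔ u = v := by
    intro u v
    constructor
    · intro h; linear_combination h - v * h2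
    · intro h; linear_combination h + v * h2
  have hx1' : x + 1 ≠ 0 := fun h => hx1 ((hadd x 1).mp h)
  have hA : (x ^ 6 + x ^ 2 : GaloisField 2 7) ≠ 0 := by
    have e : (x ^ 6 + x ^ 2 : GaloisField 2 7) = x ^ 2 * (x + 1) ^ 4 := by
      linear_combination (-2 * x ^ 5 - 3 * x ^ 4 - 2 * x ^ 3) * h2
    rw [e]
    exact mul_ne_zero (pow_ne_zero _ hx0) (pow_ne_zero _ hx1')
  have hr1 : (x ^ 6 + x ^ 5 : GaloisField 2 7) ≠ 0 := by
    have e : (x ^ 6 + x ^ 5 : GaloisField 2 7) = x ^ 5 * (x + 1) := by ring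
    rw [e]
    exact mul_ne_zero (pow_ne_zero _ hx0) hx1'
  have hr2 : (x ^ 6 + x ^ 5 + x : GaloisField 2 7) ≠ 0 := by
    intro h
    have h1 : (x ^ 6 + x ^ 5 + x) * (x ^ 5 + x ^ 4 + x ^ 3 + x) = 1 := by
      linear_combination (1 + x + 2 * x ^ 2 + 2 * x ^ 3 + x ^ 4) * hx7 +
        (x + 2 * x ^ 2 + 2 * x ^ 3 + 2 * x ^ 4 + x ^ 5 + x ^ 6) * h2
    rw [h, zero_mul] at h1
    exact zero_ne_one h1
  have key : ∀ t : GaloisField 2 7,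
      (x ^ 2 + w + 1) * t ^ 4 + (x ^ 4 + x ^ 3 + x ^ 2 + x) * t ^ 2 + x ^ 4 * t
        = (x ^ 6 + x ^ 2) *
            (t * (t + x) * (t + (x ^ 6 + x ^ 5)) * (t + (x ^ 6 + x ^ 5 + x))) := by
    intro t
    linear_combination t ^ 4 * hwx + t ^ 4 * h2 +
      ((-6) * t + (-4) * t * x ^ 1 + (-2) * t * x ^ 2 + (-2) * t * x ^ 3 +
        (-3) * t * x ^ 4 + (-3) * t * x ^ 5 + (-3) * t * x ^ 6 + (-3) * t * x ^ 7 +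
        (-1) * t * x ^ 8 + (-1) * t * x ^ 10 + (-2) * t * x ^ 11 + (-1) * t * x ^ 12 +
        (-6) * t ^ 2 + (-5) * t ^ 2 * x ^ 1 + (-4) * t ^ 2 * x ^ 2 + (-3) * t ^ 2 * x ^ 3 +
        (-3) * t ^ 2 * x ^ 4 + (-5) * t ^ 2 * x ^ 5 + (-5) * t ^ 2 * x ^ 6 +
        (-1) * t ^ 2 * x ^ 7 + (-1) * t ^ 2 * x ^ 9 + (-2) * t ^ 2 * x ^ 10 +
        (-1) * t ^ 2 * x ^ 11 + (-4) * t ^ 3 + (-2) * t ^ 3 * x ^ 1 +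
        (-2) * t ^ 3 * x ^ 4 + (-2) * t ^ 3 * x ^ 5) * hx7 +
      ((-3) * t + (-5) * t * x ^ 1 + (-3) * t * x ^ 2 + (-2) * t * x ^ 3 +
        (-2) * t * x ^ 4 + (-3) * t * x ^ 5 + (-3) * t * x ^ 6 + (-3) * t ^ 2 +
        (-5) * t ^ 2 * x ^ 1 + (-4) * t ^ 2 * x ^ 2 + (-3) * t ^ 2 * x ^ 3 +
        (-3) * t ^ 2 * x ^ 4 + (-4) * t ^ 2 * x ^ 5 + (-5) * t ^ 2 * x ^ 6 +
        (-2) * t ^ 3 + (-3) * t ^ 3 * x ^ 1 + (-1) * t ^ 3 * x ^ 2 +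
        (-1) * t ^ 3 * x ^ 3 + (-1) * t ^ 3 * x ^ 4 + (-2) * t ^ 3 * x ^ 5 +
        (-1) * t ^ 3 * x ^ 6) * h2
  have hSet : {t : GaloisField 2 7 |
      (x ^ 2 + w + 1) * t ^ 4 + (x ^ 4 + x ^ 3 + x ^ 2 + x) * t ^ 2 + x ^ 4 * t = 0}
      = {0, x, x ^ 6 + x ^ 5, x ^ 6 + x ^ 5 + x} := by
    ext t
    simp only [Set.mem_setOf_eq, Set.mem_insert_iff, Set.mem_singleton_iff]
    rw [key t]
    constructor
    · intro h
      rcases mul_eq_zero.mp h with h | h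
      · exact absurd h hA
      rcases mul_eq_zero.mp h with h | h
      · rcases mul_eq_zero.mp h with h | h
        · rcases mul_eq_zero.mp h with h | h
          · exact Or.inl h
          · exact Or.inr (Or.inl ((hadd t x).mp h))
        · exact Or.inr (Or.inr (Or.inl ((hadd t _).mp h)))
      · exact Or.inr (Or.inr (Or.inr ((hadd t _).mp h)))
    · rintro (rfl | rfl | rfl | rfl)
      · ring
      · rw [show x + x = 0 from (hadd x x).mpr rfl]; ring
      · rw [show (x ^ 6 + x ^ 5 : GaloisField 2 7) + (x ^ 6 + x ^ 5) = 0 from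
          (hadd _ _).mpr rfl]; ring
      · rw [show (x ^ 6 + x ^ 5 + x : GaloisField 2 7) + (x ^ 6 + x ^ 5 + x) = 0 from
          (hadd _ _).mpr rfl]; ring
  have d01 : (0 : GaloisField 2 7) ≠ x := Ne.symm hx0
  have d02 : (0 : GaloisField 2 7) ≠ x ^ 6 + x ^ 5 := Ne.symm hr1
  have d03 : (0 : GaloisField 2 7) ≠ x ^ 6 + x ^ 5 + x := Ne.symm hr2
  have d12 : x ≠ x ^ 6 + x ^ 5 := by
    intro h
    exact hr2 (by linear_combination (hadd x (x ^ 6 + x ^ 5)).mpr h)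
  have d13 : x ≠ x ^ 6 + x ^ 5 + x := by
    intro h
    exact hr1 (by linear_combination (hadd x (x ^ 6 + x ^ 5 + x)).mpr h + (-x) * h2)
  have d23 : (x ^ 6 + x ^ 5 : GaloisField 2 7) ≠ x ^ 6 + x ^ 5 + x := by
    intro h
    exact hx0 (by linear_combination (hadd (x ^ 6 + x ^ 5) (x ^ 6 + x ^ 5 + x)).mpr h +
      (-x ^ 6 - x ^ 5) * h2)
  refine ⟨?_, ?_, ?_⟩
  · rw [hSet]
    rw [show ({0, x, x ^ 6 + x ^ 5, x ^ 6 + x ^ 5 + x} : Set (GaloisField 2 7)) =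
      (↑({0, x, x ^ 6 + x ^ 5, x ^ 6 + x ^ 5 + x} : Finset (GaloisField 2 7)) :
        Set (GaloisField 2 7)) by simp]
    rw [Set.ncard_coe_finset]
    rw [Finset.card_insert_of_notMem (by
      simp only [Finset.mem_insert, Finset.mem_singleton]
      push_neg
      exact ⟨d01, d02, d03⟩)]
    rw [Finset.card_insert_of_notMem (by
      simp only [Finset.mem_insert, Finset.mem_singleton]
      push_neg
      exact ⟨d12, d13⟩)]
    rw [Finset.card_insert_of_notMem (by
      simp only [Finset.mem_singleton]
      exact d23)]
    rfl
  · rw [hSet]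
    exact Set.mem_insert _ _
  · rw [hSet]
    exact Or.inr (Or.inl rfl)
end

section
/- Let w ∈ GF(2^7) satisfy x⁷ + x³ + 1 = 0 for x = w⁻¹. Then the polynomial (w² + w⁻¹)t⁴ + (w⁻² + 1)t² + (w⁻⁴ + w⁻³)t has exactly four roots in GF(2^7), two of which are t = 0 and t = w⁻¹. -/
/-- If `x = w⁻¹` satisfies `x⁷ + x³ + 1 = 0` in `GF(2^7)`, the polynomial
`(w² + w⁻¹)t⁴ + (w⁻² + 1)t² + (w⁻⁴ + w⁻³)t` has exactly four roots, two of
which are `t = 0` and `t = w⁻¹`. -/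
theorem four_roots_case_two (w : GaloisField 2 7)
    (hw0 : w ≠ 0) (hw1 : w ≠ 1)
    (hw : w⁻¹ ^ 7 + w⁻¹ ^ 3 + 1 = 0) :
    Set.ncard {t : GaloisField 2 7 |
        (w ^ 2 + w⁻¹) * t ^ 4 + (w⁻¹ ^ 2 + 1) * t ^ 2 +
          (w⁻¹ ^ 4 + w⁻¹ ^ 3) * t = 0} = 4 ∧
      (0 : GaloisField 2 7) ∈ {t : GaloisField 2 7 |
        (w ^ 2 + w⁻¹) * t ^ 4 + (w⁻¹ ^ 2 + 1) * t ^ 2 +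
          (w⁻¹ ^ 4 + w⁻¹ ^ 3) * t = 0} ∧
      w⁻¹ ∈ {t : GaloisField 2 7 |
        (w ^ 2 + w⁻¹) * t ^ 4 + (w⁻¹ ^ 2 + 1) * t ^ 2 +
          (w⁻¹ ^ 4 + w⁻¹ ^ 3) * t = 0} := by
  set x := w⁻¹ with hxdef
  have h2 : (2 : GaloisField 2 7) = 0 := by
    have := CharP.cast_eq_zero (GaloisField 2 7) 2
    exact_mod_cast this
  have hx0 : x ≠ 0 := inv_ne_zero hw0
  have hwx : w = x^6 + x^2 := by
    have h1 : w * x = 1 := mul_inv_cancel₀ hw0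
    have h1' : (x^6 + x^2) * x = 1 := by linear_combination hw - h2
    exact mul_right_cancel₀ hx0 (h1.trans h1'.symm)
  have ha : w^2 + x ≠ 0 := by
    intro h
    rw [hwx] at h
    have : (1 : GaloisField 2 7) = 0 := by
      linear_combination (x + x^2 + x^5) * h + (1 + x^2 + x^7 + x^10) * hw - ((x^2 + x^3 + x^5 + x^6 + x^7 + x^9 + x^10 + x^13 + x^14 + x^17) + (x + x^2 + x^5) * x^8) * h2
    exact one_ne_zero this
  have hr0 : x^6 + x^5 ≠ 0 := by
    intro h
    have : (1 : GaloisField 2 7) = 0 := by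
      linear_combination (1 + x^2 + x^5 + x^6) * h + (1 + x^3 + x^5) * hw - (x^3 + x^5 + x^6 + x^7 + x^8 + x^10 + x^11 + x^12) * h2
    exact one_ne_zero this
  have hrx0 : x^6 + x^5 + x ≠ 0 := by
    intro h
    have : (1 : GaloisField 2 7) = 0 := by
      linear_combination (x + x^4) * h + (1 + x^2 + x^3) * hw - (x^2 + x^3 + x^5 + x^6 + x^7 + x^9 + x^10) * h2
    exact one_ne_zero this
  have key : ∀ t : GaloisField 2 7,
      (w^2 + x) * t^4 + (x^2 + 1) * t^2 + (x^4 + x^3) * t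
        = (w^2 + x) * (t * ((t + x) * ((t + (x^6 + x^5)) * (t + (x^6 + x^5) + x)))) := by
    intro t
    rw [hwx]
    linear_combination ((2)*t + (-1)*t^2 + (-2)*t^3 + (-2)*x*t^2 + (-1)*x^2*t^2 + (-2)*x^2*t^3 + (-1)*x^3*t + (-2)*x^3*t^2 + (2)*x^3*t^3 + (-1)*x^4*t + (2)*x^4*t^2 + (2)*x^4*t^3 + x^5*t^2 + (-1)*x^6*t + (-1)*x^6*t^2 + (-4)*x^6*t^3 + (-1)*x^7*t + (-4)*x^7*t^2 + (-2)*x^7*t^3 + (-1)*x^8*t + (-2)*x^8*t^2 + (2)*x^9*t^2 + (2)*x^10*t + x^10*t^2 + (-2)*x^10*t^3 + x^11*t + (-4)*x^11*t^2 + (-2)*x^11*t^3 + (-2)*x^12*t + (-5)*x^12*t^2 + (-3)*x^13*t + (-1)*x^13*t^2 + (-1)*x^14*t + (-1)*x^15*t^2 + (-1)*x^16*t + (-2)*x^16*t^2 + (-2)*x^17*t + (-1)*x^17*t^2 + (-1)*x^18*t) * hw + ((-1)*t + t^2 + t^3 + x*t^2 + x^2*t^2 + x^3*t^2 + x^4*t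 + (-1)*x^4*t^3 + x^6*t + x^6*t^2) * h2
  have hset : {t : GaloisField 2 7 |
        (w ^ 2 + x) * t ^ 4 + (x ^ 2 + 1) * t ^ 2 +
          (x ^ 4 + x ^ 3) * t = 0}
      = {0, x, x^6 + x^5, x^6 + x^5 + x} := by
    ext t
    simp only [Set.mem_setOf_eq, Set.mem_insert_iff, Set.mem_singleton_iff]
    constructor
    · intro h
      rw [key t] at h
      have h3 := (mul_eq_zero.mp h).resolve_left ha
      rcases mul_eq_zero.mp h3 with h4 | h4
      · exact Or.inl h4
      rcases mul_eq_zero.mp h4 with h5 | h5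
      · exact Or.inr (Or.inl (by linear_combination h5 - x * h2))
      rcases mul_eq_zero.mp h5 with h6 | h6
      · exact Or.inr (Or.inr (Or.inl (by linear_combination h6 - (x^6 + x^5) * h2)))
      · exact Or.inr (Or.inr (Or.inr (by linear_combination h6 - (x^6 + x^5 + x) * h2)))
    · rintro (rfl | rfl | rfl | rfl)
      · rw [hwx]; ring
      · rw [hwx]
        linear_combination ((-1)*x^2 + x^5 + x^9) * hw + (x^2 + x^4 + x^5) * h2
      · rw [hwx]
        linear_combination ((-12)*1 + (-8)*x + (2)*x^2 + (8)*x^3 + (10)*x^4 + (12)*x^5 + (8)*x^6 + (2)*x^7 + (-3)*x^8 + (-8)*x^9 + (-8)*x^10 + (-5)*x^11 + (-2)*x^12 + (2)*x^13 + (4)*x^14 + (5)*x^15 + (6)*x^16 + (4)*x^17 + (-4)*x^19 + (-6)*x^20 + (-3)*x^21 + (3)*x^22 + (6)*x^23 + (4)*x^24 + (2)*x^25 + (4)*x^26 + (6)*x^27 + (4)*x^28 + x^29) * hw + ((6)*1 + (4)*x + (-1)*x^2 + (2)*x^3 + (-1)*x^4 + (-7)*x^5 + (-8)*x^6) * h2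
      · rw [hwx]
        linear_combination ((-4)*1 + (2)*x + (5)*x^2 + (6)*x^3 + (4)*x^4 + (-1)*x^5 + (-2)*x^6 + (2)*x^7 + (3)*x^8 + (5)*x^9 + (-2)*x^10 + (-5)*x^11 + (4)*x^12 + (16)*x^13 + (16)*x^14 + (-1)*x^15 + (-6)*x^16 + (10)*x^17 + (24)*x^18 + (14)*x^19 + (-2)*x^20 + x^21 + (15)*x^22 + (18)*x^23 + (8)*x^24 + (2)*x^25 + (4)*x^26 + (6)*x^27 + (4)*x^28 + x^29) * hw + ((2)*1 + (-1)*x + (-2)*x^2 + (-1)*x^3 + (-2)*x^4 + (-1)*x^5 + (-1)*x^6) * h2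
  have hne1 : x ≠ x^6 + x^5 := by
    intro h; exact hrx0 (by linear_combination - h + x * h2)
  have hne2 : x ≠ x^6 + x^5 + x := by
    intro h; exact hr0 (by linear_combination - h)
  have hne3 : (x^6 + x^5 : GaloisField 2 7) ≠ x^6 + x^5 + x := by
    intro h; exact hx0 (by linear_combination - h)
  refine ⟨?_, ?_, ?_⟩
  · rw [hset]
    rw [Set.ncard_insert_of_notMem (by simp [hx0.symm, hr0.symm, hrx0.symm]),
      Set.ncard_insert_of_notMem (by simp [hne1, hne2]),
      Set.ncard_insert_of_notMem (by simp [hne3]),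
      Set.ncard_singleton]
  · rw [hset]; left; rfl
  · rw [hset]; right; left; rfl
end
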